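/- Let B = {B_y}_{y∈Ω_B} be an informationally complete observable on ℂ^d, i.e. whenever two density matrices ρ, σ satisfy tr[ρ B_y] = tr[σ B_y] for all y, then ρ = σ. If {I_x}_{x∈Ω_A} is an instrument implementing an observable A = {A_x}_{x∈Ω_A} that does not disturb B, then the associated channel is the identity (I_c(ρ) = ρ for every ρ) and consequently A is trivial: every effect A_x is a nonnegative scalar multiple of the identity matrix. -/

import Mathlib

open Matrix
open scoped BigOperators ComplexOrder

private lemma outer_mulVec {d : ℕ} (v w x : Fin d → ℂ) :
    vecMulVec v w *ᵥ x = (w ⬝ᵥ x) • v := by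
  ext a
  simp only [vecMulVec_apply, mulVec, dotProduct, Pi.smul_apply, smul_eq_mul,
    Finset.sum_mul, Finset.mul_sum]
  exact Finset.sum_congr rfl fun _ _ => by ring

private lemma star_dot {d : ℕ} (v x : Fin d → ℂ) :
    star v ⬝ᵥ x = star (star x ⬝ᵥ v) := by
  simp only [dotProduct, star_sum, star_mul', star_star, Pi.star_apply]
  exact Finset.sum_congr rfl fun _ _ => by ring

private lemma sum_mulVec' {d : ℕ} {ι : Type*} (s : Finset ι)
    (A : ι → Matrix (Fin d) (Fin d) ℂ) (w : Fin d → ℂ) :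
    (∑ i ∈ s, A i) *ᵥ w = ∑ i ∈ s, A i *ᵥ w := by
  ext a
  simp only [mulVec, dotProduct, Finset.sum_apply, Matrix.sum_apply, Finset.sum_mul]
  exact Finset.sum_comm

private lemma dot_sum' {d : ℕ} {ι : Type*} (s : Finset ι)
    (g : ι → Fin d → ℂ) (w : Fin d → ℂ) :
    w ⬝ᵥ (∑ i ∈ s, g i) = ∑ i ∈ s, w ⬝ᵥ g i := by
  simp only [dotProduct, Finset.sum_apply, Finset.mul_sum]
  exact Finset.sum_comm

private lemma psd_outer {d : ℕ} (v : Fin d → ℂ) : (vecMulVec v (star v)).PosSemidef := by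
  refine Matrix.PosSemidef.of_dotProduct_mulVec_nonneg ?_ ?_
  · ext i j
    simp [vecMulVec_apply, conjTranspose_apply, mul_comm]
  · intro x
    rw [outer_mulVec, dotProduct_smul, smul_eq_mul, star_dot]
    exact star_mul_self_nonneg _

private lemma psd_smul' {d : ℕ} {M : Matrix (Fin d) (Fin d) ℂ} (hM : M.PosSemidef)
    {c : ℝ} (hc : 0 ≤ c) : ((c : ℂ) • M).PosSemidef := by
  refine Matrix.PosSemidef.of_dotProduct_mulVec_nonneg ?_ ?_
  · ext i j
    simp [conjTranspose_apply, hM.1.apply]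
  · intro x
    rw [smul_mulVec, dotProduct_smul, smul_eq_mul]
    exact mul_nonneg (by exact_mod_cast hc) (hM.dotProduct_mulVec_nonneg x)

private lemma psd_sum {d : ℕ} {ι : Type*} (s : Finset ι)
    (f : ι → Matrix (Fin d) (Fin d) ℂ) (h : ∀ i ∈ s, (f i).PosSemidef) :
    (∑ i ∈ s, f i).PosSemidef :=
  Finset.sum_induction f _ (fun _ _ ha hb => ha.add hb) Matrix.PosSemidef.zero h

private lemma polar {d : ℕ} (u w : Fin d → ℂ) :
    vecMulVec u (star w) = (4⁻¹ : ℂ) •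
      ∑ k ∈ Finset.range 4, Complex.I ^ k •
        vecMulVec (u + Complex.I ^ k • w) (star (u + Complex.I ^ k • w)) := by
  have h3 : Complex.I ^ 3 = -Complex.I := by
    rw [pow_succ, Complex.I_sq]; ring
  have h4 : Complex.I ^ 4 = 1 := by
    rw [pow_succ, h3]; simp [Complex.I_mul_I]
  have h6 : Complex.I ^ 6 = -1 := by
    rw [show (6:ℕ) = 4 + 2 by rfl, pow_add, h4, Complex.I_sq]; ring
  have h9 : Complex.I ^ 9 = Complex.I := by
    rw [show (9:ℕ) = 4 + 4 + 1 by rfl, pow_add, pow_add, h4]; ring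
  ext i j
  simp only [Finset.sum_range_succ, Finset.sum_range_zero, zero_add, Matrix.smul_apply,
    Matrix.add_apply, vecMulVec_apply, Pi.add_apply, Pi.smul_apply, Pi.star_apply,
    smul_eq_mul, star_add, star_mul', Complex.star_def, map_pow, Complex.conj_I,
    pow_zero, pow_one]
  ring_nf
  simp only [_root_.map_one, Complex.I_sq, h3, h4, h6, h9]
  ring

private lemma conj_mulVec_outer {d : ℕ} (N : Matrix (Fin d) (Fin d) ℂ) (v : Fin d → ℂ) :
    N * vecMulVec v (star v) * Nᴴ = vecMulVec (N *ᵥ v) (star (N *ᵥ v)) := by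
  ext a b
  simp only [Matrix.mul_apply, vecMulVec_apply, conjTranspose_apply, mulVec, dotProduct,
    Pi.star_apply, star_sum, star_mul', star_star, Finset.sum_mul, Finset.mul_sum]
  refine Finset.sum_congr rfl fun x _ => Finset.sum_congr rfl fun y _ => by ring

private lemma sum_outer_eq_outer {d : ℕ} {ι : Type*} [Fintype ι] (u : ι → Fin d → ℂ)
    (v : Fin d → ℂ)
    (h : ∑ i, vecMulVec (u i) (star (u i)) = vecMulVec v (star v)) (i₀ : ι) :
    ∃ c : ℂ, u i₀ = c • v := by
  classical
  set t : ℂ := star v ⬝ᵥ v with ht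
  set c : ℂ := (star v ⬝ᵥ u i₀) / t with hc
  set w : Fin d → ℂ := u i₀ - c • v with hw
  have hvw : star v ⬝ᵥ w = 0 := by
    by_cases hv : v = 0
    · simp [hw, hv]
    · have htne : t ≠ 0 := fun h0 => hv (dotProduct_star_self_eq_zero.mp h0)
      rw [hw, dotProduct_sub, dotProduct_smul, smul_eq_mul, hc, div_mul_cancel₀ _ htne,
        sub_self]
  have hwv : star w ⬝ᵥ v = 0 := by
    have h' := hvw
    rw [star_dot v w] at h'
    exact star_eq_zero.mp h'
  have key : ∑ i, (star (star w ⬝ᵥ u i) * (star w ⬝ᵥ u i)) = 0 := by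
    have h2 := congrArg (fun M => star w ⬝ᵥ M *ᵥ w) h
    simp only [sum_mulVec', dot_sum', outer_mulVec, dotProduct_smul, smul_eq_mul] at h2
    calc ∑ i, (star (star w ⬝ᵥ u i) * (star w ⬝ᵥ u i))
        = ∑ i, (star (u i) ⬝ᵥ w * (star w ⬝ᵥ u i)) := by
          refine Finset.sum_congr rfl fun i _ => ?_
          rw [star_dot (u i) w]
      _ = star v ⬝ᵥ w * (star w ⬝ᵥ v) := h2
      _ = 0 := by rw [hvw, zero_mul]
  have hterm : star (star w ⬝ᵥ u i₀) * (star w ⬝ᵥ u i₀) = 0 :=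
    (Finset.sum_eq_zero_iff_of_nonneg fun i _ => star_mul_self_nonneg _).mp key i₀
      (Finset.mem_univ _)
  have hwu : star w ⬝ᵥ u i₀ = 0 := by
    have h3 : ((star w ⬝ᵥ u i₀) * star (star w ⬝ᵥ u i₀)) = 0 := by
      rw [mul_comm]; exact hterm
    rw [Complex.star_def, Complex.mul_conj] at h3
    exact Complex.normSq_eq_zero.mp (by exact_mod_cast h3)
  have hww : star w ⬝ᵥ w = 0 := by
    have h4 : star w ⬝ᵥ w = star w ⬝ᵥ u i₀ - c * (star w ⬝ᵥ v) := by
      rw [hw, dotProduct_sub, dotProduct_smul, smul_eq_mul]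
    rw [h4, hwu, hwv, mul_zero, sub_zero]
  have hw0 : w = 0 := dotProduct_star_self_eq_zero.mp hww
  exact ⟨c, sub_eq_zero.mp (hw ▸ hw0)⟩

private lemma eig_scalar {d : ℕ} (M : Matrix (Fin d) (Fin d) ℂ)
    (h : ∀ v : Fin d → ℂ, ∃ c : ℂ, M *ᵥ v = c • v) : ∃ c : ℂ, M = c • 1 := by
  classical
  rcases Nat.eq_zero_or_pos d with hd | hd
  · exact ⟨0, by subst hd; ext i j; exact i.elim0⟩
  choose cv hcv using h
  set i₀ : Fin d := ⟨0, hd⟩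
  set c₀ : ℂ := cv (Pi.single i₀ 1) with hc₀
  have hdiag : ∀ j, cv (Pi.single j 1) = c₀ := by
    intro j
    by_cases hj : j = i₀
    · rw [hj]
    · have h1 := hcv ((Pi.single i₀ 1 : Fin d → ℂ) + Pi.single j 1)
      rw [mulVec_add, hcv, hcv] at h1
      have e0 := congrFun h1 i₀
      have ej := congrFun h1 j
      simp only [Pi.add_apply, Pi.smul_apply, Pi.single_apply, smul_eq_mul, if_true,
        if_neg hj, if_neg (Ne.symm hj), mul_one, mul_zero, add_zero, zero_add] at e0 ej
      rw [ej, ← e0]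
  refine ⟨c₀, ?_⟩
  ext i j
  have h2 := congrFun (hcv (Pi.single j 1)) i
  simp only [mulVec_single_one, Matrix.col_apply, mul_one, Pi.smul_apply, Pi.single_apply, smul_eq_mul,
    hdiag j] at h2
  rw [h2]
  by_cases hij : j = i
  · simp [hij]
  · simp [if_neg (Ne.symm hij), Matrix.one_apply_ne (Ne.symm hij)]

private lemma std_eq_outer {d : ℕ} (i j : Fin d) (c : ℂ) :
    Matrix.single i j c = c • vecMulVec (Pi.single i 1) (star (Pi.single j (1:ℂ))) := by
  ext a b
  simp only [Matrix.single, Matrix.of_apply, Matrix.smul_apply, vecMulVec_apply,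
    Pi.star_apply, Pi.single_apply, smul_eq_mul]
  by_cases hia : i = a <;> by_cases hjb : j = b
  · subst hia; subst hjb; simp
  · subst hia; simp [if_neg (Ne.symm hjb), hjb]
  · subst hjb; simp [if_neg (Ne.symm hia), hia]
  · simp [if_neg (Ne.symm hia), if_neg (Ne.symm hjb), hia, hjb]

/-- If `B` is informationally complete and an instrument implementing `A` does not
disturb `B`, then the associated channel is the identity and `A` is trivial: every
effect `A x` is a nonnegative scalar multiple of the identity. -/
theorem nondisturb_informationally_complete_trivial
    {d : ℕ} {ΩA ΩB : Type*} [Fintype ΩA] [Fintype ΩB] {κ : Type*} [Fintype κ]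
    (A : ΩA → Matrix (Fin d) (Fin d) ℂ) (B : ΩB → Matrix (Fin d) (Fin d) ℂ)
    (hA : ∀ x, (A x).PosSemidef) (hAsum : ∑ x, A x = 1)
    (hB : ∀ y, (B y).PosSemidef) (hBsum : ∑ y, B y = 1)
    (hIC : ∀ ρ σ : Matrix (Fin d) (Fin d) ℂ, ρ.PosSemidef → σ.PosSemidef →
      ρ.trace = 1 → σ.trace = 1 →
      (∀ y, (ρ * B y).trace = (σ * B y).trace) → ρ = σ)
    (K : ΩA → κ → Matrix (Fin d) (Fin d) ℂ)
    (hK : ∀ x, ∑ α, (K x α)ᴴ * K x α = A x)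
    (hnd : ∀ y, ∑ x, ∑ α, (K x α)ᴴ * B y * K x α = B y) :
    (∀ ρ : Matrix (Fin d) (Fin d) ℂ, ∑ x, ∑ α, K x α * ρ * (K x α)ᴴ = ρ) ∧
    (∀ x, ∃ c : ℝ, 0 ≤ c ∧ A x = (c : ℂ) • 1) := by
  classical
  -- the channel as a linear map
  set Φ : Matrix (Fin d) (Fin d) ℂ →ₗ[ℂ] Matrix (Fin d) (Fin d) ℂ :=
    { toFun := fun M => ∑ x, ∑ α, K x α * M * (K x α)ᴴ
      map_add' := fun M N => by
        simp only [mul_add, add_mul, Finset.sum_add_distrib]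
      map_smul' := fun r M => by
        simp only [Matrix.mul_smul, Matrix.smul_mul, Finset.smul_sum, RingHom.id_apply] }
    with hΦdef
  have hΦapply : ∀ M, Φ M = ∑ x, ∑ α, K x α * M * (K x α)ᴴ := fun _ => rfl
  have hsum1 : ∑ x, ∑ α, (K x α)ᴴ * K x α = (1 : Matrix (Fin d) (Fin d) ℂ) := by
    have h1 : ∑ x, ∑ α, (K x α)ᴴ * K x α = ∑ x, A x :=
      Finset.sum_congr rfl fun x _ => hK x
    rw [h1, hAsum]
  have hΦpsd : ∀ {M : Matrix (Fin d) (Fin d) ℂ}, M.PosSemidef → (Φ M).PosSemidef := by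
    intro M hM
    rw [hΦapply]
    exact psd_sum _ _ fun x _ => psd_sum _ _ fun α _ =>
      hM.mul_mul_conjTranspose_same (K x α)
  have hΦtrace : ∀ M : Matrix (Fin d) (Fin d) ℂ, (Φ M).trace = M.trace := by
    intro M
    rw [hΦapply]
    calc (∑ x, ∑ α, K x α * M * (K x α)ᴴ).trace
        = ∑ x, ∑ α, ((K x α)ᴴ * K x α * M).trace := by
          rw [Matrix.trace_sum]
          refine Finset.sum_congr rfl fun x _ => ?_
          rw [Matrix.trace_sum]
          exact Finset.sum_congr rfl fun α _ => Matrix.trace_mul_cycle _ _ _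
      _ = ((∑ x, ∑ α, (K x α)ᴴ * K x α) * M).trace := by
          simp only [Matrix.sum_mul, Matrix.trace_sum]
      _ = M.trace := by rw [hsum1, Matrix.one_mul]
  have hΦB : ∀ (M : Matrix (Fin d) (Fin d) ℂ) (y : ΩB),
      (Φ M * B y).trace = (M * B y).trace := by
    intro M y
    rw [hΦapply]
    calc ((∑ x, ∑ α, K x α * M * (K x α)ᴴ) * B y).trace
        = ∑ x, ∑ α, ((K x α * M * (K x α)ᴴ) * B y).trace := by
          simp only [Matrix.sum_mul, Matrix.trace_sum]
      _ = ∑ x, ∑ α, ((K x α)ᴴ * B y * K x α * M).trace := by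
          refine Finset.sum_congr rfl fun x _ => Finset.sum_congr rfl fun α _ => ?_
          calc ((K x α * M * (K x α)ᴴ) * B y).trace
              = ((K x α * M) * ((K x α)ᴴ * B y)).trace := by rw [Matrix.mul_assoc]
            _ = (((K x α)ᴴ * B y) * (K x α * M)).trace := Matrix.trace_mul_comm _ _
            _ = ((K x α)ᴴ * B y * K x α * M).trace := by rw [← Matrix.mul_assoc]
      _ = ((∑ x, ∑ α, (K x α)ᴴ * B y * K x α) * M).trace := by
          simp only [Matrix.sum_mul, Matrix.trace_sum]
      _ = (M * B y).trace := by rw [hnd y, Matrix.trace_mul_comm]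
  have hdensity : ∀ ρ : Matrix (Fin d) (Fin d) ℂ, ρ.PosSemidef → ρ.trace = 1 →
      Φ ρ = ρ := fun ρ h1 h2 =>
    hIC _ _ (hΦpsd h1) h1 (by rw [hΦtrace, h2]) h2 (fun y => hΦB ρ y)
  -- Φ fixes all outer products v v†
  have houter : ∀ v : Fin d → ℂ, Φ (vecMulVec v (star v)) = vecMulVec v (star v) := by
    intro v
    by_cases hv : v = 0
    · subst hv
      have : vecMulVec (0 : Fin d → ℂ) (star (0 : Fin d → ℂ)) = 0 := by
        ext a b; simp [vecMulVec_apply]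
      rw [this, map_zero]
    · set t : ℝ := ∑ i, Complex.normSq (v i) with htdef
      have htr : (vecMulVec v (star v)).trace = (t : ℂ) := by
        rw [Matrix.trace]
        simp only [Matrix.diag_apply, vecMulVec_apply, Pi.star_apply, htdef]
        push_cast
        exact Finset.sum_congr rfl fun i _ => by
          rw [← Complex.mul_conj]; rfl
      have htpos : 0 < t := by
        obtain ⟨i, hi⟩ := Function.ne_iff.mp hv
        exact Finset.sum_pos' (fun i _ => Complex.normSq_nonneg _)
          ⟨i, Finset.mem_univ i, Complex.normSq_pos.mpr hi⟩
      have htne : (t : ℂ) ≠ 0 := by exact_mod_cast htpos.ne'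
      have hρ : Φ (((t⁻¹ : ℝ) : ℂ) • vecMulVec v (star v))
          = ((t⁻¹ : ℝ) : ℂ) • vecMulVec v (star v) := by
        refine hdensity _ (psd_smul' (psd_outer v) (inv_nonneg.mpr htpos.le)) ?_
        rw [Matrix.trace_smul, htr, smul_eq_mul]
        push_cast
        field_simp
      rw [_root_.map_smul] at hρ
      have hcoe : ((t⁻¹ : ℝ) : ℂ) ≠ 0 := by
        push_cast
        exact inv_ne_zero htne
      exact smul_right_injective (Matrix (Fin d) (Fin d) ℂ) hcoe hρ
  -- Φ fixes all rank-one matrices, by polarization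
  have houter2 : ∀ u w : Fin d → ℂ,
      Φ (vecMulVec u (star w)) = vecMulVec u (star w) := by
    intro u w
    rw [polar u w, _root_.map_smul, map_sum]
    congr 1
    refine Finset.sum_congr rfl fun k _ => ?_
    rw [_root_.map_smul, houter]
  -- Φ is the identity
  have hid : ∀ M : Matrix (Fin d) (Fin d) ℂ, Φ M = M := by
    intro M
    conv_lhs => rw [matrix_eq_sum_single M]
    rw [map_sum]
    conv_rhs => rw [matrix_eq_sum_single M]
    refine Finset.sum_congr rfl fun i _ => ?_
    rw [map_sum]
    refine Finset.sum_congr rfl fun j _ => ?_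
    rw [std_eq_outer, _root_.map_smul, houter2]
  refine ⟨fun ρ => hid ρ, ?_⟩
  intro x
  have hKs : ∀ α, ∃ c : ℂ, K x α = c • 1 := by
    intro α
    apply eig_scalar
    intro v
    have hsum2 : ∑ p : ΩA × κ, vecMulVec (K p.1 p.2 *ᵥ v) (star (K p.1 p.2 *ᵥ v))
        = vecMulVec v (star v) := by
      rw [Fintype.sum_prod_type]
      calc ∑ x', ∑ α', vecMulVec (K x' α' *ᵥ v) (star (K x' α' *ᵥ v))
          = ∑ x', ∑ α', K x' α' * vecMulVec v (star v) * (K x' α')ᴴ :=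
            Finset.sum_congr rfl fun _ _ => Finset.sum_congr rfl fun _ _ =>
              (conj_mulVec_outer _ _).symm
        _ = vecMulVec v (star v) := hid _
    exact sum_outer_eq_outer _ _ hsum2 (x, α)
  choose c hc using hKs
  refine ⟨∑ α, Complex.normSq (c α),
    Finset.sum_nonneg fun _ _ => Complex.normSq_nonneg _, ?_⟩
  rw [← hK x]
  calc ∑ α, (K x α)ᴴ * K x α
      = ∑ α, ((Complex.normSq (c α) : ℂ)) • (1 : Matrix (Fin d) (Fin d) ℂ) := by
        refine Finset.sum_congr rfl fun α _ => ?_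
        rw [hc α, conjTranspose_smul, conjTranspose_one, Matrix.smul_mul,
          Matrix.mul_smul, Matrix.one_mul, smul_smul]
        congr 1
        rw [Complex.star_def, mul_comm, Complex.mul_conj]
    _ = ((∑ α, Complex.normSq (c α) : ℝ) : ℂ) • 1 := by
        rw [← Finset.sum_smul]
        push_cast
        rfl
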